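/- arXiv:1303.5172 — 6 statements merged into one kernel-verified Lean document; each statement's English description precedes it below -/
import Mathlib

section
/- The maximum privacy discrepancy satisfies α = max_{1≤i,j≤m} α_{ij} = max_{1≤j≤m} π_j(1−π_j)/(π_j + (1-p)/(mp)). -/
/-!
Write `c = (1 - p) / m` and `d_j = p π_j + c`. Then `r_{ij} - π_i = p π_i (δ_{ij} - π_j) / d_j`,
so in column `j` the diagonal entry is `p π_j (1 - π_j) / d_j`, while an off-diagonal entry is
`p π_i π_j / d_j`, which is smaller because `π_i ≤ 1 - π_j`. Hence the maximum over all pairs is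
the maximum of the diagonal, and dividing numerator and denominator by `p` gives the formula.
-/

open Finset

theorem Finset.sup'_univ_prod_eq_sup'_diag {ι α : Type*} [Fintype ι] [SemilatticeSup α]
    (g : ι → ι → α) (hg : ∀ i j, g i j ≤ g j j)
    (h1 : (univ : Finset (ι × ι)).Nonempty) (h2 : (univ : Finset ι).Nonempty) :
    univ.sup' h1 (fun q => g q.1 q.2) = univ.sup' h2 (fun j => g j j) :=
  le_antisymm
    (sup'_le _ _ fun q _ => le_sup'_of_le _ (mem_univ q.2) (hg q.1 q.2))
    (sup'_le _ _ fun j _ => le_sup'_of_le (fun q => g q.1 q.2) (mem_univ (j, j)) le_rfl)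

theorem add_le_sum_of_ne {ι M : Type*} [Fintype ι] [AddCommMonoid M] [PartialOrder M]
    [IsOrderedAddMonoid M] {π : ι → M} (hπ : ∀ i, 0 ≤ π i)
    {i j : ι} (hij : i ≠ j) : π i + π j ≤ ∑ k, π k := by
  classical
  rw [← sum_pair hij]
  exact sum_le_sum_of_subset_of_nonneg (subset_univ _) fun k _ _ => hπ k

theorem mix_mul_div_sub_self {p c a b : ℝ} (δ : ℝ) (h : p * b + c ≠ 0) :
    (p * δ + c) * a / (p * b + c) - a = p * a * (δ - b) / (p * b + c) := by
  field_simp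
  ring

theorem mul_div_mul_add {p c x y : ℝ} (hp : p ≠ 0) : p * x / (p * y + c) = x / (y + c / p) := by
  rw [← mul_div_mul_left x (y + c / p) hp, mul_add, mul_div_cancel₀ c hp]

section Discrepancy

variable {ι : Type*} [DecidableEq ι]

/-- `α_{ij} = |P(X = x_i | R = x_j) - π_i|`, with `c` in place of `(1 - p) / m`. -/
noncomputable def discrepancy (p c : ℝ) (π : ι → ℝ) (i j : ι) : ℝ :=
  |(p * (if i = j then (1 : ℝ) else 0) + c) * π i / (p * π j + c) - π i|

variable {p c : ℝ} {π : ι → ℝ}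

theorem discrepancy_self [Fintype ι] (hp : 0 ≤ p) (hc : 0 < c) (hπ : ∀ i, 0 ≤ π i)
    (hsum : ∑ i, π i = 1) (j : ι) : discrepancy p c π j j = p * π j * (1 - π j) / (p * π j + c) := by
  have hd : 0 < p * π j + c := by have := hπ j; positivity
  have hπj : π j ≤ 1 := hsum ▸ single_le_sum (fun i _ => hπ i) (mem_univ j)
  rw [discrepancy, if_pos rfl, mix_mul_div_sub_self _ hd.ne', abs_of_nonneg]
  exact div_nonneg (mul_nonneg (mul_nonneg hp (hπ j)) (sub_nonneg.2 hπj)) hd.le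

theorem discrepancy_of_ne (hp : 0 ≤ p) (hc : 0 < c) (hπ : ∀ i, 0 ≤ π i) {i j : ι} (hij : i ≠ j) :
    discrepancy p c π i j = p * π i * π j / (p * π j + c) := by
  have hd : 0 < p * π j + c := by have := hπ j; positivity
  rw [discrepancy, if_neg hij, mix_mul_div_sub_self _ hd.ne', zero_sub, mul_neg, neg_div, abs_neg,
    abs_of_nonneg]
  have := hπ i; have := hπ j; positivity

theorem discrepancy_le_self [Fintype ι] (hp : 0 ≤ p) (hc : 0 < c) (hπ : ∀ i, 0 ≤ π i)
    (hsum : ∑ i, π i = 1) (i j : ι) : discrepancy p c π i j ≤ discrepancy p c π j j := by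
  obtain rfl | hij := eq_or_ne i j
  · rfl
  rw [discrepancy_of_ne hp hc hπ hij, discrepancy_self hp hc hπ hsum]
  have hπi : π i ≤ 1 - π j := by linarith [add_le_sum_of_ne hπ hij]
  refine div_le_div_of_nonneg_right ?_ (by have := hπ j; positivity)
  calc p * π i * π j = p * π j * π i := by ring
    _ ≤ p * π j * (1 - π j) := mul_le_mul_of_nonneg_left hπi (mul_nonneg hp (hπ j))

end Discrepancy

theorem alpha_max_formula_general
    (m : ℕ) (p : ℝ) (hp : 0 < p) (hp1 : p < 1)
    (π : Fin m → ℝ) (hπ : ∀ i, 0 ≤ π i) (hsum : ∑ i, π i = 1)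
    (r α : Fin m → Fin m → ℝ)
    (hr : ∀ i j, r i j = ((p * (if i = j then (1 : ℝ) else 0) + (1 - p) / m) * π i)
        / (p * π j + (1 - p) / m))
    (hα : ∀ i j, α i j = |r i j - π i|)
    (h1 : (Finset.univ : Finset (Fin m × Fin m)).Nonempty)
    (h2 : (Finset.univ : Finset (Fin m)).Nonempty) :
    Finset.univ.sup' h1 (fun q => α q.1 q.2)
      = Finset.univ.sup' h2 (fun j => π j * (1 - π j) / (π j + (1 - p) / (m * p))) := by
  have hm : (0 : ℝ) < m := by simpa using h2.card_pos
  have hc : 0 < (1 - p) / m := div_pos (sub_pos.2 hp1) hm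
  have hα_eq : α = discrepancy p ((1 - p) / m) π := by
    funext i j
    rw [hα, hr, discrepancy]
  rw [hα_eq, sup'_univ_prod_eq_sup'_diag _ (discrepancy_le_self hp.le hc hπ hsum)]
  refine sup'_congr h2 rfl fun j _ => ?_
  rw [discrepancy_self hp.le hc hπ hsum, mul_assoc, mul_div_mul_add hp.ne', div_div]

/-- The maximum privacy discrepancy satisfies
`α = max_{i,j} α_{ij} = max_j π_j (1-π_j) / (π_j + (1-p)/(m p))`. -/
theorem alpha_max_formula
    (m : ℕ) (hm : 2 ≤ m) (p : ℝ) (hp : 0 < p) (hp1 : p < 1)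
    (π : Fin m → ℝ) (hπ : ∀ i, 0 ≤ π i) (hsum : ∑ i, π i = 1)
    (r α : Fin m → Fin m → ℝ)
    (hr : ∀ i j, r i j = ((p * (if i = j then (1 : ℝ) else 0) + (1 - p) / m) * π i)
        / (p * π j + (1 - p) / m))
    (hα : ∀ i j, α i j = |r i j - π i|)
    (h1 : (Finset.univ : Finset (Fin m × Fin m)).Nonempty)
    (h2 : (Finset.univ : Finset (Fin m)).Nonempty) :
    Finset.univ.sup' h1 (fun q => α q.1 q.2)
      = Finset.univ.sup' h2 (fun j => π j * (1 - π j) / (π j + (1 - p) / (m * p))) :=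
  alpha_max_formula_general m p hp hp1 π hπ hsum r α hr hα h1 h2
end

section
/- (Theorem 1, sufficiency) If p ≤ p_0 = 1/(1 + (m/ξ)·((1-ξ)/2)²), then for all probability vectors (π_1,...,π_m), π_j(1−π_j) − ξπ_j ≤ ξ(1-p)/(mp) holds for all 1 ≤ j ≤ m. -/
/-!
Since `π (1 - π) - ξ π = π (1 - ξ - π)`, AM-GM bounds it by `((1 - ξ) / 2) ^ 2`.
Clearing denominators, the threshold
`p ≤ 1 / (1 + (m / ξ) c)` is exactly `c ≤ ξ (1 - p) / (m p)`, here with `c = ((1 - ξ) / 2) ^ 2`.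
-/

lemma mul_one_sub_sub_mul_le_sq (x ξ : ℝ) : x * (1 - x) - ξ * x ≤ ((1 - ξ) / 2) ^ 2 := by
  have h := four_mul_le_sq_add x (1 - ξ - x)
  rw [add_sub_cancel] at h
  linarith

lemma le_one_div_one_add_div_mul_iff {m ξ p c : ℝ} (hm : 0 < m) (hξ : 0 < ξ) (hp : 0 < p)
    (hc : 0 ≤ c) : p ≤ 1 / (1 + m / ξ * c) ↔ c ≤ ξ * (1 - p) / (m * p) := by
  have hscale : 0 < ξ / (m * p) := by positivity
  have key : ξ * (1 - p) / (m * p) - c = ξ / (m * p) * (1 - p * (1 + m / ξ * c)) := by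
    field_simp
    ring
  rw [le_div_iff₀ (by positivity), ← sub_nonneg, ← sub_nonneg (b := c), key,
    mul_nonneg_iff_of_pos_left hscale]

theorem privacy_bound_of_p_le_p0_general
    (m : ℕ) (ξ p : ℝ) (hξ : 0 < ξ)
    (hp : 0 < p)
    (hpp0 : p ≤ 1 / (1 + ((m : ℝ) / ξ) * ((1 - ξ) / 2) ^ 2)) :
    ∀ π : Fin m → ℝ, (∀ i, 0 ≤ π i) → ∑ i, π i = 1 →
      ∀ j, π j * (1 - π j) - ξ * π j ≤ ξ * (1 - p) / (m * p) := by
  intro π _ _ j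
  have hm : (0 : ℝ) < m := Nat.cast_pos.mpr j.pos
  calc π j * (1 - π j) - ξ * π j ≤ ((1 - ξ) / 2) ^ 2 := mul_one_sub_sub_mul_le_sq _ _
    _ ≤ ξ * (1 - p) / (m * p) := (le_one_div_one_add_div_mul_iff hm hξ hp (by positivity)).mp hpp0

/-- Theorem 1 (sufficiency): if `p ≤ p₀ = 1/(1 + (m/ξ)((1-ξ)/2)²)` then for all
probability vectors `π`, `π_j(1-π_j) - ξ π_j ≤ ξ(1-p)/(m p)` for all `j`. -/
theorem privacy_bound_of_p_le_p0
    (m : ℕ) (hm : 2 ≤ m) (ξ p : ℝ) (hξ : 0 < ξ) (hξ1 : ξ < 1)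
    (hp : 0 < p) (hp1 : p < 1)
    (hpp0 : p ≤ 1 / (1 + ((m : ℝ) / ξ) * ((1 - ξ) / 2) ^ 2)) :
    ∀ π : Fin m → ℝ, (∀ i, 0 ≤ π i) → ∑ i, π i = 1 →
      ∀ j, π j * (1 - π j) - ξ * π j ≤ ξ * (1 - p) / (m * p) :=
  privacy_bound_of_p_le_p0_general m ξ p hξ hp hpp0
end

section
/- (Theorem 1, necessity) If 0 < p < 1 and for all probability vectors (π_1,...,π_m) the inequality π_j(1−π_j) − ξπ_j ≤ ξ(1-p)/(mp) holds for all j, then p ≤ p_0 = 1/(1 + (m/ξ)·((1-ξ)/2)²). -/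
/-! The two-point distribution `π = ((1 - ξ)/2, (1 + ξ)/2, 0, …, 0)` makes the left-hand side at
`j = 1` equal to `a (1 - a - ξ) = a²` with `a = (1 - ξ)/2`, since `1 - a - ξ = a`. The resulting
inequality `a² ≤ ξ (1 - p)/(m p)` is linear in `p` and rearranges to `p ≤ p₀`. -/

theorem Fintype.sum_pi_single_add_pi_single {ι M : Type*} [Fintype ι] [DecidableEq ι]
    [AddCommMonoid M] (i j : ι) (a b : M) :
    ∑ k, (Pi.single i a + Pi.single j b : ι → M) k = a + b := by
  simp [Finset.sum_add_distrib, Finset.sum_pi_single']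

theorem le_one_div_one_add_of_le_div {m ξ p c : ℝ} (hm : 0 < m) (hξ : 0 < ξ) (hp : 0 < p)
    (hc : 0 ≤ c) (h : c ≤ ξ * (1 - p) / (m * p)) :
    p ≤ 1 / (1 + m / ξ * c) := by
  have h' : c * (m * p) ≤ ξ * (1 - p) := (le_div_iff₀ (by positivity)).mp h
  rw [le_div_iff₀ (by positivity)]
  calc p * (1 + m / ξ * c) = p + c * (m * p) / ξ := by field_simp
    _ ≤ p + ξ * (1 - p) / ξ := by gcongr
    _ = 1 := by field_simp; ring

theorem p_le_p0_of_privacy_bound_general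
    (m : ℕ) (hm : 2 ≤ m) (ξ p : ℝ) (hξ : 0 < ξ) (hξ1 : ξ < 1)
    (hp : 0 < p)
    (hpriv : ∀ π : Fin m → ℝ, (∀ i, 0 ≤ π i) → ∑ i, π i = 1 →
      ∀ j, π j * (1 - π j) - ξ * π j ≤ ξ * (1 - p) / (m * p)) :
    p ≤ 1 / (1 + ((m : ℝ) / ξ) * ((1 - ξ) / 2) ^ 2) := by
  set a := (1 - ξ) / 2
  have ha : 0 ≤ a := by simp only [a]; linarith
  have hb : 0 ≤ (1 + ξ) / 2 := by linarith
  let i₀ : Fin m := ⟨0, by omega⟩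
  let i₁ : Fin m := ⟨1, by omega⟩
  have hi : i₀ ≠ i₁ := by simp [i₀, i₁, Fin.ext_iff]
  set π : Fin m → ℝ := Pi.single i₀ a + Pi.single i₁ ((1 + ξ) / 2)
  have hπ_nonneg : 0 ≤ π := add_nonneg (Pi.single_nonneg.mpr ha) (Pi.single_nonneg.mpr hb)
  have hπ_sum : ∑ i, π i = 1 := by
    rw [Fintype.sum_pi_single_add_pi_single]
    ring
  have hπ₀ : π i₀ = a := by simp [π, hi]
  have hbound := hpriv π hπ_nonneg hπ_sum i₀
  rw [hπ₀, show a * (1 - a) - ξ * a = a ^ 2 by ring] at hbound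
  exact le_one_div_one_add_of_le_div (by exact_mod_cast (by omega : 0 < m)) hξ hp (sq_nonneg a) hbound

/-- Theorem 1 (necessity): if for all probability vectors `π` the inequality
`π_j(1-π_j) - ξ π_j ≤ ξ(1-p)/(m p)` holds for all `j`, then
`p ≤ p₀ = 1/(1 + (m/ξ)((1-ξ)/2)²)`. -/
theorem p_le_p0_of_privacy_bound
    (m : ℕ) (hm : 2 ≤ m) (ξ p : ℝ) (hξ : 0 < ξ) (hξ1 : ξ < 1)
    (hp : 0 < p) (hp1 : p < 1)
    (hpriv : ∀ π : Fin m → ℝ, (∀ i, 0 ≤ π i) → ∑ i, π i = 1 →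
      ∀ j, π j * (1 - π j) - ξ * π j ≤ ξ * (1 - p) / (m * p)) :
    p ≤ 1 / (1 + ((m : ℝ) / ξ) * ((1 - ξ) / 2) ^ 2) :=
  p_le_p0_of_privacy_bound_general m hm ξ p hξ hξ1 hp hpriv
end

section
/- (Theorem 2, sufficiency) Suppose 0 < ξ < c < 1 and p ≤ p_0 = ((c−ξ)/m)/((c−ξ)/m + ξ(1−c)). Then for every probability vector (π_1,...,π_m) with π_1 ≥ c, the revealing probability P(X = x_1 | R = x_j) = (pδ_{1j} + (1-p)/m)π_1/(pπ_j + (1-p)/m) is at least ξ for every 1 ≤ j ≤ m. -/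
/-!
Write `q = (1 - p) / m` for the probability of answering a fixed value at random. For `j = 0`
the revealing probability is `(p + q) π₀ / (p π₀ + q)`, which exceeds `π₀ ≥ c > ξ` as `π₀ ≤ 1`.
For `j ≠ 0` it is `q π₀ / (p πⱼ + q)` with `πⱼ ≤ 1 - π₀ ≤ 1 - c`, so it suffices that
`ξ p (1 - c) ≤ q (c - ξ)`, and this is exactly the condition `p ≤ p₀`.
-/

open Finset

lemma le_div_add_iff_mul_le_one_sub_mul {p a b : ℝ} (hab : 0 < a + b) :
    p ≤ a / (a + b) ↔ p * b ≤ (1 - p) * a := by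
  rw [le_div_iff₀ hab]
  constructor <;> intro h <;> linarith

section ProbabilityVector

variable {ι : Type*} [Fintype ι] {π : ι → ℝ}

lemma le_one_of_sum_eq_one (hπ : ∀ i, 0 ≤ π i) (hsum : ∑ i, π i = 1) (i : ι) : π i ≤ 1 :=
  hsum ▸ single_le_sum (fun k _ ↦ hπ k) (mem_univ i)

lemma add_le_one_of_sum_eq_one [DecidableEq ι] (hπ : ∀ i, 0 ≤ π i) (hsum : ∑ i, π i = 1)
    {i j : ι} (hij : i ≠ j) : π i + π j ≤ 1 := by
  rw [← sum_pair hij, ← hsum]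
  exact sum_le_sum_of_subset_of_nonneg (subset_univ _) fun k _ _ ↦ hπ k

end ProbabilityVector

lemma le_add_mul_div_mul_add {ξ p q x : ℝ} (hp : 0 ≤ p) (hq : 0 < q)
    (hx₀ : 0 ≤ x) (hξx : ξ ≤ x) (hx₁ : x ≤ 1) :
    ξ ≤ (p + q) * x / (p * x + q) := by
  have hden : 0 < p * x + q := by positivity
  rw [le_div_iff₀ hden]
  nlinarith [mul_nonneg (mul_nonneg hp hx₀) (sub_nonneg.2 (hξx.trans hx₁)),
    mul_nonneg hq.le (sub_nonneg.2 hξx)]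

lemma le_mul_div_mul_add {ξ p q c x y : ℝ} (hξ : 0 ≤ ξ) (hp : 0 ≤ p) (hq : 0 < q)
    (hy₀ : 0 ≤ y) (hy : y ≤ 1 - c) (hcx : c ≤ x) (hpq : p * (ξ * (1 - c)) ≤ q * (c - ξ)) :
    ξ ≤ q * x / (p * y + q) := by
  have hden : 0 < p * y + q := by positivity
  rw [le_div_iff₀ hden]
  nlinarith [mul_le_mul_of_nonneg_left hy (mul_nonneg hξ hp), mul_le_mul_of_nonneg_left hcx hq.le]

theorem revealing_ge_xi_of_p_le_p0_general
    (m : ℕ) [NeZero m] (ξ c p : ℝ)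
    (hξ : 0 < ξ) (hξc : ξ < c) (hc : c < 1)
    (hp : 0 < p) (hp1 : p < 1)
    (hpp0 : p ≤ ((c - ξ) / m) / ((c - ξ) / m + ξ * (1 - c))) :
    ∀ π : Fin m → ℝ, (∀ i, 0 ≤ π i) → ∑ i, π i = 1 → c ≤ π 0 →
      ∀ j : Fin m,
        ξ ≤ (p * (if (0 : Fin m) = j then (1 : ℝ) else 0) + (1 - p) / m) * π 0
              / (p * π j + (1 - p) / m) := by
  intro π hπ hsum hcπ j
  have hm : (0 : ℝ) < m := Nat.cast_pos.2 (NeZero.pos m)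
  have hq : 0 < (1 - p) / m := div_pos (by linarith) hm
  have hthreshold : p * (ξ * (1 - c)) ≤ (1 - p) / m * (c - ξ) := by
    have hpos : 0 < (c - ξ) / m + ξ * (1 - c) :=
      add_pos (div_pos (by linarith) hm) (mul_pos hξ (by linarith))
    exact ((le_div_add_iff_mul_le_one_sub_mul hpos).1 hpp0).trans_eq (by ring)
  by_cases h0j : (0 : Fin m) = j
  · subst h0j
    simp only [if_true, mul_one]
    exact le_add_mul_div_mul_add hp.le hq (hπ 0) (hξc.le.trans hcπ)
      (le_one_of_sum_eq_one hπ hsum 0)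
  · simp only [if_neg h0j, mul_zero, zero_add]
    have hpair : π 0 + π j ≤ 1 := add_le_one_of_sum_eq_one hπ hsum h0j
    exact le_mul_div_mul_add hξ.le hp.le hq (hπ j) (by linarith) hcπ hthreshold

/-- Theorem 2 (sufficiency): if `0 < ξ < c < 1` and `p ≤ p₀ = ((c-ξ)/m)/((c-ξ)/m + ξ(1-c))`,
then for every probability vector `π` with `π 0 ≥ c`, the revealing probability
`(p δ_{0j} + (1-p)/m) π 0 / (p π_j + (1-p)/m)` is at least `ξ` for every `j`. -/
theorem revealing_ge_xi_of_p_le_p0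
    (m : ℕ) (hm : 2 ≤ m) [NeZero m] (ξ c p : ℝ)
    (hξ : 0 < ξ) (hξc : ξ < c) (hc : c < 1)
    (hp : 0 < p) (hp1 : p < 1)
    (hpp0 : p ≤ ((c - ξ) / m) / ((c - ξ) / m + ξ * (1 - c))) :
    ∀ π : Fin m → ℝ, (∀ i, 0 ≤ π i) → ∑ i, π i = 1 → c ≤ π 0 →
      ∀ j : Fin m,
        ξ ≤ (p * (if (0 : Fin m) = j then (1 : ℝ) else 0) + (1 - p) / m) * π 0
              / (p * π j + (1 - p) / m) :=
  revealing_ge_xi_of_p_le_p0_general m ξ c p hξ hξc hc hp hp1 hpp0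
end

section
/- (Theorem 2, necessity) Suppose 0 < ξ < c < 1, 0 < p < 1, and for every probability vector (π_1,...,π_m) with π_1 ≥ c one has (pδ_{1j} + (1-p)/m)π_1/(pπ_j + (1-p)/m) ≥ ξ for all j. Then p ≤ p_0 = ((c−ξ)/m)/((c−ξ)/m + ξ(1−c)). -/
/-!
Test the hypothesis on the prior with mass `c` on outcome `0` and `1 - c` on another outcome `j`:
for that `j` it reads `ξ (p (1 - c) + (1 - p)/m) ≤ c (1 - p)/m`, which rearranges to `p ≤ p₀`.
-/

open Finset

noncomputable def twoPointVector {m : ℕ} (i j : Fin m) (c : ℝ) : Fin m → ℝ :=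
  Pi.single i c + Pi.single j (1 - c)

section twoPointVector

variable {m : ℕ} {i j : Fin m} {c : ℝ}

lemma twoPointVector_nonneg (hc0 : 0 ≤ c) (hc1 : c ≤ 1) (k : Fin m) :
    0 ≤ twoPointVector i j c k :=
  (add_nonneg (Pi.single_nonneg.2 hc0) (Pi.single_nonneg.2 (sub_nonneg.2 hc1)) :
    0 ≤ twoPointVector i j c) k

lemma sum_twoPointVector (i j : Fin m) (c : ℝ) : ∑ k, twoPointVector i j c k = 1 := by
  simp [twoPointVector, sum_add_distrib]

lemma twoPointVector_apply_left (hij : i ≠ j) : twoPointVector i j c i = c := by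
  simp [twoPointVector, hij.symm]

lemma twoPointVector_apply_right (hij : i ≠ j) : twoPointVector i j c j = 1 - c := by
  simp [twoPointVector, hij.symm]

end twoPointVector

lemma le_p0_of_xi_le_revealing {m ξ c p : ℝ} (hm : 0 < m) (hξ : 0 < ξ) (hξc : ξ < c)
    (hc : c < 1) (hp : 0 < p) (hp1 : p < 1)
    (h : ξ ≤ (1 - p) / m * c / (p * (1 - c) + (1 - p) / m)) :
    p ≤ ((c - ξ) / m) / ((c - ξ) / m + ξ * (1 - c)) := by
  have hq : 0 < (1 - p) / m := div_pos (by linarith) hm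
  have hcξ : 0 < (c - ξ) / m := div_pos (by linarith) hm
  rw [le_div_iff₀ (by nlinarith)] at h
  rw [le_div_iff₀ (by nlinarith)]
  have hexpand : (c - ξ) / m = p * ((c - ξ) / m) + (1 - p) / m * (c - ξ) := by
    field_simp
    ring
  nlinarith

/-- Theorem 2 (necessity): if for every probability vector `π` with `π 0 ≥ c` the
revealing probability is at least `ξ` for all `j`, then
`p ≤ p₀ = ((c-ξ)/m)/((c-ξ)/m + ξ(1-c))`. -/
theorem p_le_p0_of_revealing_ge_xi
    (m : ℕ) (hm : 2 ≤ m) [NeZero m] (ξ c p : ℝ)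
    (hξ : 0 < ξ) (hξc : ξ < c) (hc : c < 1)
    (hp : 0 < p) (hp1 : p < 1)
    (hpriv : ∀ π : Fin m → ℝ, (∀ i, 0 ≤ π i) → ∑ i, π i = 1 → c ≤ π 0 →
      ∀ j : Fin m,
        ξ ≤ (p * (if (0 : Fin m) = j then (1 : ℝ) else 0) + (1 - p) / m) * π 0
              / (p * π j + (1 - p) / m)) :
    p ≤ ((c - ξ) / m) / ((c - ξ) / m + ξ * (1 - c)) := by
  set j : Fin m := ⟨1, hm⟩
  have h0j : (0 : Fin m) ≠ j := Fin.ne_of_val_ne (by simp [j])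
  have hrev := hpriv (twoPointVector 0 j c)
    (twoPointVector_nonneg (by linarith) hc.le) (sum_twoPointVector 0 j c)
    (twoPointVector_apply_left h0j).ge j
  rw [if_neg h0j, twoPointVector_apply_left h0j, twoPointVector_apply_right h0j, mul_zero,
    zero_add] at hrev
  exact le_p0_of_xi_le_revealing (by positivity) hξ hξc hc hp hp1 hrev
end

section
/- For m = 2 and 0 < ξ < 1, the bound of Theorem 1 specializes to p_0 = 2ξ/(2ξ + (1−ξ)²), and the condition α ≤ ξ for all (π_1, π_2) with π_1 + π_2 = 1 holds iff p ≤ p_0. -/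
/-! With `c = (1 - p)/(2p) > 0`, clearing the denominator turns `π(1 - π)/(π + c) ≤ ξ` into
`(π - (1 - ξ)/2)² + (ξc - ((1 - ξ)/2)²) ≥ 0`. This holds for every `π ∈ [0, 1]` exactly when it
holds at the vertex `π = (1 - ξ)/2`, i.e. when `((1 - ξ)/2)² ≤ ξc`, which rearranges to
`p(2ξ + (1 - ξ)²) ≤ 2ξ`. -/

open Set

lemma forall_simplex_two_max_le_iff (f : ℝ → ℝ) (ξ : ℝ) :
    (∀ π1 π2 : ℝ, 0 ≤ π1 → 0 ≤ π2 → π1 + π2 = 1 → max (f π1) (f π2) ≤ ξ) ↔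
      ∀ π ∈ Icc (0 : ℝ) 1, f π ≤ ξ := by
  constructor
  · intro h π ⟨hπ0, hπ1⟩
    exact (le_max_left _ _).trans (h π (1 - π) hπ0 (by linarith) (by ring))
  · intro h π1 π2 h1 h2 h12
    exact max_le (h π1 ⟨h1, by linarith⟩) (h π2 ⟨h2, by linarith⟩)

lemma mul_one_sub_div_le_iff {π c ξ : ℝ} (h : 0 < π + c) :
    π * (1 - π) / (π + c) ≤ ξ ↔ 0 ≤ (π - (1 - ξ) / 2) ^ 2 + (ξ * c - ((1 - ξ) / 2) ^ 2) := by
  rw [div_le_iff₀ h, ← sub_nonneg]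
  ring_nf

lemma forall_mul_one_sub_div_le_iff {c ξ : ℝ} (hc : 0 < c) (hξ : -1 ≤ ξ) (hξ1 : ξ ≤ 1) :
    (∀ π ∈ Icc (0 : ℝ) 1, π * (1 - π) / (π + c) ≤ ξ) ↔ ((1 - ξ) / 2) ^ 2 ≤ ξ * c := by
  constructor
  · intro h
    have hvertex := h ((1 - ξ) / 2) ⟨by linarith, by linarith⟩
    rw [mul_one_sub_div_le_iff (by linarith)] at hvertex
    simpa using hvertex
  · intro hdisc π ⟨hπ0, _⟩
    rw [mul_one_sub_div_le_iff (by linarith)]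
    nlinarith [sq_nonneg (π - (1 - ξ) / 2)]

lemma sq_le_mul_iff_le_threshold {ξ p : ℝ} (hp : 0 < p) :
    ((1 - ξ) / 2) ^ 2 ≤ ξ * ((1 - p) / (2 * p)) ↔ p ≤ 2 * ξ / (2 * ξ + (1 - ξ) ^ 2) := by
  have hden : 0 < 2 * ξ + (1 - ξ) ^ 2 := by nlinarith [sq_nonneg ξ]
  rw [mul_div_assoc', le_div_iff₀ (by positivity), le_div_iff₀ hden]
  constructor <;> intro h <;> nlinarith

lemma threshold_eq {ξ : ℝ} (hξ : ξ ≠ 0) :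
    2 * ξ / (2 * ξ + (1 - ξ) ^ 2) = 1 / (1 + (2 / ξ) * ((1 - ξ) / 2) ^ 2) := by
  have hden : 2 * ξ + (1 - ξ) ^ 2 ≠ 0 := by nlinarith [sq_nonneg ξ]
  field_simp

/-- Dichotomous case (`m = 2`) of Theorem 1: `p₀` specializes to `2ξ/(2ξ + (1-ξ)²)`,
and `α ≤ ξ` for all probability vectors `(π₁, π₂)` iff `p ≤ p₀`. -/
theorem theorem1_dichotomous
    (ξ p : ℝ) (hξ : 0 < ξ) (hξ1 : ξ < 1) (hp : 0 < p) (hp1 : p < 1) :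
    2 * ξ / (2 * ξ + (1 - ξ) ^ 2) = 1 / (1 + (2 / ξ) * ((1 - ξ) / 2) ^ 2) ∧
    ((∀ π1 π2 : ℝ, 0 ≤ π1 → 0 ≤ π2 → π1 + π2 = 1 →
        max (π1 * (1 - π1) / (π1 + (1 - p) / (2 * p)))
            (π2 * (1 - π2) / (π2 + (1 - p) / (2 * p))) ≤ ξ) ↔
      p ≤ 2 * ξ / (2 * ξ + (1 - ξ) ^ 2)) := by
  have hc : 0 < (1 - p) / (2 * p) := div_pos (by linarith) (by linarith)
  refine ⟨threshold_eq hξ.ne', ?_⟩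
  rw [forall_simplex_two_max_le_iff (fun π => π * (1 - π) / (π + (1 - p) / (2 * p))),
    forall_mul_one_sub_div_le_iff hc (by linarith) hξ1.le, sq_le_mul_iff_le_threshold hp]
end
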